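/- Let (X,d) be a δ-hyperbolic, α-almost geodesic separable metric space, and let (x_n) be a sequence in X converging in the horoclosure to a horofunction β̂. Then (x_n) converges to a point of the Gromov boundary ∂X if and only if β̂ is unbounded below (inf β̂ = −∞). In that case, any other sequence (x'_n) converging in the horoclosure to β̂ satisfies (x_n | x'_n)_o → ∞, i.e. defines the same Gromov boundary point. -/
import Mathlib


/-!
STATEMENT 10: Let (X,d) be a δ-hyperbolic, α-almost geodesic separable metric
space, and let (x_n) be a sequence converging in the horoclosure to a
horofunction β̂ (i.e. the normalized distance functions of the `x_n` converge
pointwise, modulo additive constants, to a lift `h` of β̂).  Then (x_n)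
converges to a point of the Gromov boundary iff `inf h = -∞`; and in that
case any other sequence converging in the horoclosure to β̂ defines the same
Gromov boundary point, i.e. the mutual Gromov products tend to infinity.
-/

open Filter Set

namespace Stmt10

variable {X : Type*} [MetricSpace X]

/-- The Gromov product `(x|y)_o`. -/
noncomputable def gp (o x y : X) : ℝ := (dist x o + dist y o - dist x y) / 2

/-- `X` is `δ`-hyperbolic. -/
def IsGromovHyperbolicWith (X : Type*) [MetricSpace X] (δ : ℝ) : Prop :=
  ∀ o x y z : X, min (gp o x z) (gp o z y) - δ ≤ gp o x y

/-- `X` is `α`-almost geodesic. -/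
def IsAlmostGeodesicWith (X : Type*) [MetricSpace X] (α : ℝ) : Prop :=
  ∀ x y : X, ∀ t ∈ Icc (0 : ℝ) (dist x y), ∃ z : X,
    |dist x z - t| ≤ α ∧ |dist y z - (dist x y - t)| ≤ α

/-- The sequence `u` converges at infinity: the Gromov products
`(u_i | u_j)_o` tend to `∞` as `i, j → ∞`.  This means precisely that `u`
converges to a point of the Gromov boundary `∂X` (namely its equivalence
class). -/
def ConvAtInfinity (o : X) (u : ℕ → X) : Prop :=
  Tendsto (fun p : ℕ × ℕ => gp o (u p.1) (u p.2)) atTop atTop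

/-- The sequence `x` converges in the horoclosure to the horofunction (lift)
`h`: the functions `y ↦ d(x_n, y) - c_n` converge pointwise to `h` for some
normalizing constants `c_n` (convergence in `ℝ^X / ℝ·1`; pointwise convergence
agrees with uniform convergence on compacta for these 1-Lipschitz functions). -/
def ConvToHorofunction (x : ℕ → X) (h : X → ℝ) : Prop :=
  ∃ c : ℕ → ℝ, ∀ y : X, Tendsto (fun n => dist (x n) y - c n) atTop (nhds (h y))

/-- **Horofunction limits and the Gromov boundary.** -/
theorem horoclosure_vs_gromov_boundary (δ α : ℝ) (hδ : 0 ≤ δ) (hα : 0 ≤ α)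
    [TopologicalSpace.SeparableSpace X]
    (hhyp : IsGromovHyperbolicWith X δ) (hgeo : IsAlmostGeodesicWith X α)
    (o : X) (x : ℕ → X) (h : X → ℝ) (hx : ConvToHorofunction x h) :
    (ConvAtInfinity o x ↔ ¬ BddBelow (range h)) ∧
    (¬ BddBelow (range h) →
      ∀ x' : ℕ → X, ConvToHorofunction x' h →
        Tendsto (fun n => gp o (x n) (x' n)) atTop atTop) := by
  obtain ⟨c, hc⟩ := hx
  -- h is 1-Lipschitz-below at o
  have hlip : ∀ y : X, h o - dist y o ≤ h y := by
    intro y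
    have h1 : Tendsto (fun n => (dist (x n) o - c n) - dist y o) atTop
        (nhds (h o - dist y o)) := (hc o).sub_const _
    refine le_of_tendsto_of_tendsto h1 (hc y) (Eventually.of_forall fun n => ?_)
    have h2 : dist (x n) o ≤ dist (x n) y + dist y o := dist_triangle _ _ _
    simp only [Pi.le_def]
    linarith
  -- the Gromov products with a fixed point converge
  have hgp : ∀ (x' : ℕ → X) (c' : ℕ → ℝ),
      (∀ y, Tendsto (fun n => dist (x' n) y - c' n) atTop (nhds (h y))) →
      ∀ y : X, Tendsto (fun n => gp o (x' n) y) atTop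
        (nhds ((h o - h y + dist y o) / 2)) := by
    intro x' c' hc' y
    have hEq : (fun n => gp o (x' n) y) = fun n =>
        ((dist (x' n) o - c' n) - (dist (x' n) y - c' n) + dist y o) / 2 := by
      funext n; unfold gp; ring
    rw [hEq]
    exact (((hc' o).sub (hc' y)).add_const _).div_const _
  -- key lemma
  have key : ¬ BddBelow (range h) → ∀ (x' : ℕ → X), ConvToHorofunction x' h →
      ∀ M : ℝ, ∃ N, ∀ n ≥ N, ∀ m ≥ N, M ≤ gp o (x n) (x' m) := by
    intro hub x' hx' M
    obtain ⟨c', hc'⟩ := hx'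
    obtain ⟨y, hy⟩ : ∃ y, h y < h o - (M + δ + 1) := by
      by_contra hcon
      push_neg at hcon
      exact hub ⟨h o - (M + δ + 1), by rintro v ⟨y, rfl⟩; exact hcon y⟩
    have hT : M + δ < (h o - h y + dist y o) / 2 := by
      have := hlip y; linarith
    have e1 : ∀ᶠ n in atTop, M + δ ≤ gp o (x n) y :=
      Tendsto.eventually_const_le hT (hgp x c hc y)
    have e2 : ∀ᶠ n in atTop, M + δ ≤ gp o (x' n) y :=
      Tendsto.eventually_const_le hT (hgp x' c' hc' y)
    obtain ⟨N1, hN1⟩ := eventually_atTop.1 e1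
    obtain ⟨N2, hN2⟩ := eventually_atTop.1 e2
    refine ⟨max N1 N2, fun n hn m hm => ?_⟩
    have hyp := hhyp o (x n) (x' m) y
    have g1 : M + δ ≤ gp o (x n) y := hN1 n (le_trans (le_max_left _ _) hn)
    have g2 : M + δ ≤ gp o (x' m) y := hN2 m (le_trans (le_max_right _ _) hm)
    have gsym : gp o y (x' m) = gp o (x' m) y := by
      unfold gp; rw [dist_comm y (x' m)]; ring
    rw [gsym] at hyp
    have : M + δ ≤ min (gp o (x n) y) (gp o (x' m) y) := le_min g1 g2
    linarith
  constructor
  · constructor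
    · -- conv at infinity implies unbounded below
      intro hconv hbdd
      obtain ⟨B, hB⟩ := hbdd
      set t : ℝ := max 0 (h o - B + 3 * α + 2 * δ + 1) with ht
      have ht0 : 0 ≤ t := le_max_left _ _
      have ht1 : h o - B + 3 * α + 2 * δ + 1 ≤ t := le_max_right _ _
      obtain ⟨a, ha⟩ := eventually_atTop.1 (tendsto_atTop.1 hconv t)
      set n0 : ℕ := max a.1 a.2 with hn0
      have hmem : ∀ m ≥ n0, t ≤ gp o (x n0) (x m) := by
        intro m hm
        exact ha (n0, m) ⟨le_max_left _ _, le_trans (le_max_right _ _) hm⟩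
      have hself : t ≤ dist (x n0) o := by
        have := hmem n0 le_rfl
        unfold gp at this
        rw [dist_self] at this
        linarith
      obtain ⟨z, hz1, hz2⟩ := hgeo o (x n0) t ⟨ht0, by rw [dist_comm]; exact hself⟩
      rw [abs_le] at hz1 hz2
      have hzo : t - α ≤ dist z o := by
        have := hz1.1; rw [dist_comm o z] at this; linarith
      have hzo' : dist z o ≤ t + α := by
        have := hz1.2; rw [dist_comm o z] at this; linarith
      have hzx : dist (x n0) z ≤ dist (x n0) o - t + α := by
        have := hz2.2; rw [dist_comm o (x n0)] at this; linarith
    -- gp o z (x n0) ≥ t - α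
      have gz0 : t - α ≤ gp o z (x n0) := by
        unfold gp
        rw [dist_comm z (x n0)]
        linarith
      have hbound : ∀ m ≥ n0, dist (x m) z - c m ≤ (dist (x m) o - c m) - t + (3 * α + 2 * δ) := by
        intro m hm
        have hyp := hhyp o z (x m) (x n0)
        have hmin : t - α ≤ min (gp o z (x n0)) (gp o (x n0) (x m)) :=
          le_min gz0 (le_trans (by linarith) (hmem m hm))
        have gzx : t - α - δ ≤ gp o z (x m) := by linarith
        unfold gp at gzx
        rw [dist_comm z (x m)] at gzx
        linarith
      have hlim1 : Tendsto (fun m => (dist (x m) o - c m) - t + (3 * α + 2 * δ)) atTop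
          (nhds (h o - t + (3 * α + 2 * δ))) := ((hc o).sub_const t).add_const _
      have hfin : h z ≤ h o - t + (3 * α + 2 * δ) :=
        le_of_tendsto_of_tendsto (hc z) hlim1 (eventually_atTop.2 ⟨n0, hbound⟩)
      have : B ≤ h z := hB ⟨z, rfl⟩
      linarith
    · -- unbounded below implies conv at infinity
      intro hub
      refine tendsto_atTop.2 fun b => ?_
      obtain ⟨N, hN⟩ := key hub x ⟨c, hc⟩ b
      exact eventually_atTop.2 ⟨(N, N), fun p hp => hN p.1 hp.1 p.2 hp.2⟩
  · intro hub x' hx'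
    refine tendsto_atTop.2 fun b => ?_
    obtain ⟨N, hN⟩ := key hub x' hx' b
    exact eventually_atTop.2 ⟨N, fun n hn => hN n hn n hn⟩

end Stmt10
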